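/- arXiv:2306.16257 — 4 statements merged into one kernel-verified Lean document; each statement's English description precedes it below -/
import Mathlib

section
/- Let x be a real number, set s = 1/2 + i·x, and let φ ∈ (-π, π). Then the rotated-ray integral converges and Γ(s)·Γ(1-s) = e^{-i·φ·s} · ∫₀^∞ t^{s-1}/(1 + t·e^{-i·φ}) dt, where t^{s-1} denotes the complex power exp((s-1)·log t) of the positive real number t. -/
/-!
For `0 < Re s < 1` consider `M(z) = ∫₀^∞ t^(s-1) / (1 + t e^z) dt` on the strip `|Im z| < π`.
The elementary bound `‖1 + r e^(iy)‖ ≥ cos (y/2) (1 + r)` dominates the integrand locally uniformly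
by a multiple of `t^(Re s - 1) / (1 + t)`, so `M` is holomorphic on the strip. For real `z` the
substitution `t ↦ e^(-z) t` gives `M(z) = e^(-zs) M(0)`, and `M(0) = B(s, 1 - s) = Γ(s) Γ(1 - s)`
after `t = y / (1 - y)`. By the identity theorem `M(z) = e^(-zs) Γ(s) Γ(1 - s)` on the whole strip;
the rotated ray is `z = -iφ`.
-/

open MeasureTheory Set Real Filter Topology

theorem cos_half_im_mul_le_norm_one_add_mul_exp (z : ℂ) (r : ℝ) :
    Real.cos (z.im / 2) * (1 + r * Real.exp z.re) ≤ ‖1 + r * Complex.exp z‖ := by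
  refine le_of_pow_le_pow_left₀ two_ne_zero (norm_nonneg _) ?_
  have hcos : Real.cos z.im = 2 * Real.cos (z.im / 2) ^ 2 - 1 := by
    rw [Real.cos_sq, mul_div_cancel₀ _ two_ne_zero]; ring
  have hc : Real.cos (z.im / 2) ^ 2 ≤ 1 := Real.cos_sq_le_one _
  rw [Complex.sq_norm, Complex.normSq_apply]
  simp only [Complex.add_re, Complex.one_re, Complex.mul_re, Complex.ofReal_re, Complex.ofReal_im,
    Complex.exp_re, Complex.exp_im, Complex.add_im, Complex.one_im, Complex.mul_im, zero_mul,
    sub_zero, zero_add, ← mul_assoc]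
  -- `‖1 + u e^{iy}‖² - cos²(y/2) (1 + u)² = sin²(y/2) (1 - u)²`
  generalize Real.cos (z.im / 2) = c at *
  generalize r * Real.exp z.re = u
  nlinarith [congrArg (u ^ 2 * ·) (Real.sin_sq_add_cos_sq z.im),
    mul_nonneg (sub_nonneg.2 hc) (sq_nonneg (1 - u))]

lemma cos_half_mul_le_norm_one_add_mul_exp {b : ℝ} {z : ℂ} (hb : b ≤ π) (hzb : |z.im| ≤ b)
    {t : ℝ} (ht : 0 ≤ t) :
    Real.cos (b / 2) * (1 + t * Real.exp z.re) ≤ ‖1 + t * Complex.exp z‖ := by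
  have hcos : Real.cos (b / 2) ≤ Real.cos (z.im / 2) := by
    rw [← Real.cos_abs (z.im / 2), abs_div, abs_two]
    exact Real.cos_le_cos_of_nonneg_of_le_pi (by positivity) (by linarith [pi_pos]) (by linarith)
  exact (mul_le_mul_of_nonneg_right hcos (by positivity)).trans
    (cos_half_im_mul_le_norm_one_add_mul_exp z t)

lemma min_one_exp_mul_le {x₀ x t : ℝ} (hx : x₀ ≤ x) (ht : 0 ≤ t) :
    min 1 (Real.exp x₀) * (1 + t) ≤ 1 + t * Real.exp x := by
  have h1 := min_le_left 1 (Real.exp x₀)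
  have h2 := (min_le_right 1 (Real.exp x₀)).trans (Real.exp_le_exp.2 hx)
  nlinarith

lemma integrableOn_rpow_sub_one_div_one_add {σ : ℝ} (h0 : 0 < σ) (h1 : σ < 1) :
    IntegrableOn (fun t : ℝ => t ^ (σ - 1) / (1 + t)) (Ioi 0) := by
  have hmeas : AEStronglyMeasurable (fun t : ℝ => t ^ (σ - 1) / (1 + t)) :=
    (by fun_prop : Measurable _).aestronglyMeasurable
  rw [← Ioc_union_Ioi_eq_Ioi zero_le_one]
  refine IntegrableOn.union ?_ ?_
  · have hint : IntegrableOn (fun t : ℝ => t ^ (σ - 1)) (Ioc 0 1) := by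
      rw [← intervalIntegrable_iff_integrableOn_Ioc_of_le zero_le_one]
      exact intervalIntegral.intervalIntegrable_rpow' (by linarith)
    refine hint.mono' hmeas.restrict ?_
    filter_upwards [ae_restrict_mem measurableSet_Ioc] with t ht
    rw [Real.norm_of_nonneg (by have := ht.1; positivity)]
    exact div_le_self (by have := ht.1; positivity) (by linarith [ht.1])
  · refine (integrableOn_Ioi_rpow_of_lt (by linarith : σ - 1 - 1 < -1) one_pos).mono'
      hmeas.restrict ?_
    filter_upwards [ae_restrict_mem measurableSet_Ioi] with t (ht : 1 < t)
    have ht0 : 0 < t := one_pos.trans ht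
    rw [Real.norm_of_nonneg (by positivity), Real.rpow_sub_one ht0.ne' (σ - 1)]
    exact div_le_div_of_nonneg_left (by positivity) ht0 (by linarith)

lemma cos_half_pos_of_abs_le {b y : ℝ} (hb : b < π) (hyb : |y| ≤ b) : 0 < Real.cos (b / 2) :=
  Real.cos_pos_of_mem_Ioo ⟨by linarith [abs_nonneg y, pi_pos], by linarith⟩

lemma one_add_mul_exp_ne_zero {z : ℂ} (hz : |z.im| < π) {t : ℝ} (ht : 0 ≤ t) :
    1 + t * Complex.exp z ≠ 0 := by
  have hpos : 0 < Real.cos (|z.im| / 2) * (1 + t * Real.exp z.re) :=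
    mul_pos (cos_half_pos_of_abs_le hz le_rfl) (by positivity)
  exact norm_pos_iff.1 (hpos.trans_le (cos_half_mul_le_norm_one_add_mul_exp hz.le le_rfl ht))

lemma norm_cpow_smul_inv_one_add_mul_exp_le {b x₀ : ℝ} {z : ℂ} (hb : b < π) (hzb : |z.im| ≤ b)
    (hzx : x₀ ≤ z.re) (s : ℂ) {t : ℝ} (ht : 0 < t) :
    ‖(t : ℂ) ^ (s - 1) • (1 + t * Complex.exp z)⁻¹‖
      ≤ (Real.cos (b / 2) * min 1 (Real.exp x₀))⁻¹ * (t ^ (s.re - 1) / (1 + t)) := by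
  have hc := cos_half_pos_of_abs_le hb hzb
  have hlow : Real.cos (b / 2) * min 1 (Real.exp x₀) * (1 + t) ≤ ‖1 + t * Complex.exp z‖ := by
    rw [mul_assoc]
    exact (mul_le_mul_of_nonneg_left (min_one_exp_mul_le hzx ht.le) hc.le).trans
      (cos_half_mul_le_norm_one_add_mul_exp hb.le hzb ht.le)
  rw [norm_smul, norm_inv, Complex.norm_cpow_eq_rpow_re_of_pos ht, Complex.sub_re, Complex.one_re]
  calc t ^ (s.re - 1) * ‖1 + t * Complex.exp z‖⁻¹
      ≤ t ^ (s.re - 1) * (Real.cos (b / 2) * min 1 (Real.exp x₀) * (1 + t))⁻¹ := by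
        gcongr
    _ = _ := by rw [mul_inv]; ring

lemma norm_cpow_smul_mul_exp_div_sq_le {b x₀ : ℝ} {z : ℂ} (hb : b < π) (hzb : |z.im| ≤ b)
    (hzx : x₀ ≤ z.re) (s : ℂ) {t : ℝ} (ht : 0 < t) :
    ‖(t : ℂ) ^ (s - 1) • (-(t * Complex.exp z) / (1 + t * Complex.exp z) ^ 2)‖
      ≤ (Real.cos (b / 2) ^ 2 * min 1 (Real.exp x₀))⁻¹ * (t ^ (s.re - 1) / (1 + t)) := by
  have hc := cos_half_pos_of_abs_le hb hzb
  have hlow := cos_half_mul_le_norm_one_add_mul_exp hb.le hzb ht.le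
  have hmt := min_one_exp_mul_le hzx ht.le
  set c := Real.cos (b / 2)
  set m := min 1 (Real.exp x₀)
  set u := t * Real.exp z.re
  set d := ‖1 + t * Complex.exp z‖
  have hu : 0 ≤ u := by positivity
  have hd : 0 < d := (mul_pos hc (by positivity)).trans_le hlow
  have hq : u / d ^ 2 ≤ (c ^ 2 * m * (1 + t))⁻¹ := by
    rw [div_le_iff₀ (by positivity), inv_mul_eq_div, le_div_iff₀ (by positivity)]
    nlinarith [mul_le_mul_of_nonneg_left hmt (by positivity : 0 ≤ u * c ^ 2),
      pow_le_pow_left₀ (by positivity) hlow 2]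
  have hnorm : ‖(t : ℂ) * Complex.exp z‖ = u := by
    rw [norm_mul, Complex.norm_exp, Complex.norm_real, Real.norm_of_nonneg ht.le]
  rw [norm_smul, norm_div, norm_neg, norm_pow, hnorm, Complex.norm_cpow_eq_rpow_re_of_pos ht,
    Complex.sub_re, Complex.one_re]
  calc t ^ (s.re - 1) * (u / d ^ 2) ≤ t ^ (s.re - 1) * (c ^ 2 * m * (1 + t))⁻¹ := by gcongr
    _ = _ := by rw [mul_inv]; ring

lemma mellinConvergent_inv_one_add_mul_exp {s : ℂ} (hs0 : 0 < s.re) (hs1 : s.re < 1) {z : ℂ}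
    (hz : |z.im| < π) : MellinConvergent (fun t : ℝ => (1 + t * Complex.exp z)⁻¹) s := by
  unfold MellinConvergent
  refine ((integrableOn_rpow_sub_one_div_one_add hs0 hs1).const_mul
    (Real.cos (|z.im| / 2) * min 1 (Real.exp z.re))⁻¹).mono'
    (by fun_prop : Measurable fun t : ℝ =>
      (t : ℂ) ^ (s - 1) • (1 + t * Complex.exp z)⁻¹).aestronglyMeasurable ?_
  filter_upwards [ae_restrict_mem measurableSet_Ioi] with t ht
  exact norm_cpow_smul_inv_one_add_mul_exp_le hz le_rfl le_rfl s ht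

lemma hasDerivAt_inv_one_add_mul_exp {z : ℂ} {t : ℝ} (hz : 1 + t * Complex.exp z ≠ 0) :
    HasDerivAt (fun w : ℂ => (1 + t * Complex.exp w)⁻¹)
      (-(t * Complex.exp z) / (1 + t * Complex.exp z) ^ 2) z :=
  (((Complex.hasDerivAt_exp z).const_mul (t : ℂ)).const_add 1).inv hz

lemma differentiableOn_mellin_inv_one_add_mul_exp {s : ℂ} (hs0 : 0 < s.re) (hs1 : s.re < 1) :
    DifferentiableOn ℂ (fun z : ℂ => mellin (fun t : ℝ => (1 + t * Complex.exp z)⁻¹) s)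
      (Complex.im ⁻¹' Ioo (-π) π) := by
  intro z₀ hz₀
  have hz₀' : |z₀.im| < π := abs_lt.2 hz₀
  set δ := (π - |z₀.im|) / 2
  have hδ : 0 < δ := by simp only [δ]; linarith
  have hball : ∀ z ∈ Metric.ball z₀ δ, |z.im| ≤ |z₀.im| + δ ∧ z₀.re - δ ≤ z.re := by
    intro z hz
    rw [Metric.mem_ball, dist_eq_norm] at hz
    have him := (Complex.abs_im_le_norm (z - z₀)).trans hz.le
    have hre := (Complex.abs_re_le_norm (z - z₀)).trans hz.le
    rw [Complex.sub_im] at him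
    rw [Complex.sub_re] at hre
    constructor
    · linarith [abs_sub_abs_le_abs_sub z.im z₀.im]
    · linarith [neg_abs_le (z.re - z₀.re)]
  have hb : |z₀.im| + δ < π := by simp only [δ]; linarith
  have hderiv := hasDerivAt_integral_of_dominated_loc_of_deriv_le
    (μ := volume.restrict (Ioi 0)) (Metric.ball_mem_nhds z₀ hδ)
    (F := fun z t => (t : ℂ) ^ (s - 1) • (1 + t * Complex.exp z)⁻¹)
    (F' := fun z t =>
      (t : ℂ) ^ (s - 1) • (-(t * Complex.exp z) / (1 + t * Complex.exp z) ^ 2))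
    (bound := fun t => (Real.cos ((|z₀.im| + δ) / 2) ^ 2 * min 1 (Real.exp (z₀.re - δ)))⁻¹ *
      (t ^ (s.re - 1) / (1 + t)))
    (.of_forall fun z => (by fun_prop : Measurable fun t : ℝ =>
      (t : ℂ) ^ (s - 1) • (1 + t * Complex.exp z)⁻¹).aestronglyMeasurable)
    (mellinConvergent_inv_one_add_mul_exp hs0 hs1 hz₀')
    (by fun_prop : Measurable fun t : ℝ => (t : ℂ) ^ (s - 1) •
      (-(t * Complex.exp z₀) / (1 + t * Complex.exp z₀) ^ 2)).aestronglyMeasurable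
    (by
      filter_upwards [ae_restrict_mem measurableSet_Ioi] with t ht z hz
      exact norm_cpow_smul_mul_exp_div_sq_le hb (hball z hz).1 (hball z hz).2 s ht)
    ((integrableOn_rpow_sub_one_div_one_add hs0 hs1).const_mul _)
    (by
      filter_upwards [ae_restrict_mem measurableSet_Ioi] with t ht z hz
      refine (hasDerivAt_inv_one_add_mul_exp ?_).const_smul ((t : ℂ) ^ (s - 1))
      exact one_add_mul_exp_ne_zero ((hball z hz).1.trans_lt hb) (le_of_lt ht))
  exact hderiv.2.differentiableAt.differentiableWithinAt

lemma mellin_inv_one_add_mul_exp_ofReal (s : ℂ) (x : ℝ) :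
    mellin (fun t : ℝ => (1 + t * Complex.exp x)⁻¹) s
      = Complex.exp (-x * s) * mellin (fun t : ℝ => (1 + (t : ℂ))⁻¹) s := by
  have hscale := mellin_comp_mul_left (fun t : ℝ => (1 + (t : ℂ))⁻¹) s (Real.exp_pos x)
  rw [Complex.cpow_def_of_ne_zero (by exact_mod_cast (Real.exp_pos x).ne'),
    ← Complex.ofReal_log (Real.exp_pos x).le, Real.log_exp, smul_eq_mul, mul_neg,
    ← neg_mul] at hscale
  rw [← hscale]
  congr 1
  ext t
  push_cast
  ring_nf

lemma integral_Ioi_eq_integral_Ioo_div_one_sub {E : Type*} [NormedAddCommGroup E]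
    [NormedSpace ℝ E] (f : ℝ → E) :
    ∫ t in Ioi 0, f t = ∫ y in Ioo 0 1, (1 / (1 - y) ^ 2) • f (y / (1 - y)) := by
  have hderiv : ∀ y ∈ Ioo (0 : ℝ) 1,
      HasDerivWithinAt (fun y : ℝ => y / (1 - y)) (1 / (1 - y) ^ 2) (Ioo 0 1) y := by
    intro y hy
    have h1y : 1 - y ≠ 0 := by linarith [hy.2]
    refine (((hasDerivAt_id y).div ((hasDerivAt_id y).const_sub 1) h1y).congr_deriv ?_)
      |>.hasDerivWithinAt
    simp
  have hinj : InjOn (fun y : ℝ => y / (1 - y)) (Ioo 0 1) := by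
    intro u hu v hv huv
    have h1u : 1 - u ≠ 0 := by linarith [hu.2]
    have h1v : 1 - v ≠ 0 := by linarith [hv.2]
    field_simp at huv
    linarith
  have himage : (fun y : ℝ => y / (1 - y)) '' Ioo 0 1 = Ioi 0 := by
    refine (image_subset_iff.2 fun y hy => div_pos hy.1 (by linarith [hy.2])).antisymm
      fun t (ht : 0 < t) =>
        ⟨t / (1 + t), ⟨by positivity, (div_lt_one (by positivity)).2 (by linarith)⟩, ?_⟩
    field_simp
    ring
  rw [← himage, integral_image_eq_integral_abs_deriv_smul measurableSet_Ioo hderiv hinj]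
  refine setIntegral_congr_fun measurableSet_Ioo fun y _ => ?_
  rw [abs_of_nonneg (by positivity)]

lemma mellin_inv_one_add {s : ℂ} (hs0 : 0 < s.re) (hs1 : s.re < 1) :
    mellin (fun t : ℝ => (1 + (t : ℂ))⁻¹) s = Complex.Gamma s * Complex.Gamma (1 - s) := by
  have hbeta :=
    Complex.Gamma_mul_Gamma_eq_betaIntegral hs0 (by simpa using hs1 : 0 < (1 - s).re)
  rw [add_sub_cancel, Complex.Gamma_one, one_mul] at hbeta
  rw [hbeta, Complex.betaIntegral, intervalIntegral.integral_of_le zero_le_one,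
    integral_Ioc_eq_integral_Ioo, mellin, integral_Ioi_eq_integral_Ioo_div_one_sub]
  refine setIntegral_congr_fun measurableSet_Ioo fun y hy => ?_
  have hy0 : 0 < y := hy.1
  have h1y : 0 < 1 - y := by linarith [hy.2]
  have h1y' : (1 : ℂ) - y ≠ 0 := by exact_mod_cast h1y.ne'
  have hpow : ((y / (1 - y) : ℝ) : ℂ) ^ (s - 1)
      = (y : ℂ) ^ (s - 1) * ((1 - (y : ℂ)) * (1 - (y : ℂ)) ^ (-s)) := by
    have harg : ((1 - y : ℝ) : ℂ).arg ≠ π := by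
      rw [Complex.arg_ofReal_of_nonneg h1y.le]
      exact pi_ne_zero.symm
    rw [div_eq_mul_inv, Complex.ofReal_mul,
      Complex.mul_cpow_ofReal_nonneg hy0.le (inv_nonneg.2 h1y.le), Complex.ofReal_inv,
      Complex.inv_cpow _ _ harg, ← Complex.cpow_neg, neg_sub, sub_eq_add_neg 1 s,
      Complex.cpow_add _ _ (by exact_mod_cast h1y.ne'), Complex.cpow_one, Complex.ofReal_sub,
      Complex.ofReal_one]
  rw [hpow, smul_eq_mul, Complex.real_smul, show 1 - s - 1 = -s by ring]
  push_cast
  field_simp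
  ring

theorem mellin_inv_one_add_mul_exp {s : ℂ} (hs0 : 0 < s.re) (hs1 : s.re < 1) {z : ℂ}
    (hz : |z.im| < π) :
    mellin (fun t : ℝ => (1 + t * Complex.exp z)⁻¹) s
      = Complex.exp (-z * s) * (Complex.Gamma s * Complex.Gamma (1 - s)) := by
  have hopen : IsOpen (Complex.im ⁻¹' Ioo (-π) π) := isOpen_Ioo.preimage Complex.continuous_im
  have hconn : IsPreconnected (Complex.im ⁻¹' Ioo (-π) π) :=
    ((convex_Ioo _ _).linear_preimage Complex.imLm).isPreconnected
  have hreal : ∀ x : ℝ, mellin (fun t : ℝ => (1 + t * Complex.exp x)⁻¹) s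
      = Complex.exp (-x * s) * (Complex.Gamma s * Complex.Gamma (1 - s)) := fun x => by
    rw [mellin_inv_one_add_mul_exp_ofReal, mellin_inv_one_add hs0 hs1]
  have hofReal : Tendsto ((↑) : ℝ → ℂ) (𝓝[≠] 0) (𝓝[≠] 0) := by
    simpa using Complex.continuous_ofReal.continuousWithinAt.tendsto_nhdsWithin (x := 0)
      (s := {0}ᶜ) (t := {0}ᶜ) fun x hx => Complex.ofReal_ne_zero.2 hx
  have hentire : Differentiable ℂ fun z : ℂ =>
      Complex.exp (-z * s) * (Complex.Gamma s * Complex.Gamma (1 - s)) := by fun_prop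
  exact AnalyticOnNhd.eqOn_of_preconnected_of_frequently_eq
    ((differentiableOn_mellin_inv_one_add_mul_exp hs0 hs1).analyticOnNhd hopen)
    (hentire.differentiableOn.analyticOnNhd hopen) hconn (z₀ := 0) (by simp [pi_pos])
    (hofReal.frequently (.of_forall hreal)) (abs_lt.1 hz)

/-- For `s = 1/2 + i x` and `φ ∈ (-π, π)`, the rotated-ray integral converges and
`Γ(s)·Γ(1-s) = e^{-iφs} ∫₀^∞ t^(s-1)/(1 + t e^{-iφ}) dt`. -/
theorem stmt2 (x φ : ℝ) (hφ : φ ∈ Ioo (-π) π) (s : ℂ) (hs : s = 1/2 + Complex.I * x) :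
    IntegrableOn
      (fun t : ℝ => (t : ℂ) ^ (s - 1) / (1 + (t : ℂ) * Complex.exp (-Complex.I * φ))) (Ioi 0) ∧
    Complex.Gamma s * Complex.Gamma (1 - s)
      = Complex.exp (-Complex.I * φ * s) *
        ∫ t in Ioi (0:ℝ), (t : ℂ) ^ (s - 1) / (1 + (t : ℂ) * Complex.exp (-Complex.I * φ)) := by
  have hre : s.re = 1 / 2 := by simp [hs]
  have hs0 : 0 < s.re := by rw [hre]; norm_num
  have hs1 : s.re < 1 := by rw [hre]; norm_num
  have hz : |(-Complex.I * φ).im| < π := by simpa using abs_lt.2 hφ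
  have hconv := mellinConvergent_inv_one_add_mul_exp hs0 hs1 hz
  have hmellin := mellin_inv_one_add_mul_exp hs0 hs1 hz
  simp only [MellinConvergent, mellin, smul_eq_mul, ← div_eq_mul_inv] at hconv hmellin
  refine ⟨hconv, ?_⟩
  rw [hmellin, ← mul_assoc, ← Complex.exp_add,
    show -Complex.I * φ * s + -(-Complex.I * φ) * s = 0 by ring, Complex.exp_zero, one_mul]
end

section
/- Let ν be a real number and φ ∈ (-π, π). Define f(z) = -cosh((z + i/2)·φ) / ( cosh(π·z) · (ν² - (z + i/2)²/4) ). Then the semicircle integrals I(R) = ∫₀^π f(R·e^{i·t}) · i·R·e^{i·t} dt, taken over positive integers R, tend to 0 as R → ∞ (R ranging over ℕ). -/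
/-! On `‖z‖ = n` the numerator obeys `‖cosh ((z + i/2) φ)‖ ≤ exp (|φ| |Re z|) ≤ exp (π |Re z|)`,
and `cosh (π z)` grows just as fast: away from the imaginary axis `‖cosh (π z)‖ ≥ |sinh (π Re z)|`,
while near it `|Im z|` is within `1/3` of the integer `n`, so `|cos (π Im z)| ≥ 1/2`. The ratio of
the two `cosh` factors is therefore bounded, the rational factor is `O(1/n²)`, and the arc has
length `π n`, so its integral is `O(1/n)`. -/

open Real Filter

namespace Complex

theorem norm_cosh_sq (z : ℂ) :
    ‖cosh z‖ ^ 2 = Real.sinh z.re ^ 2 + Real.cos z.im ^ 2 := by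
  have hcosh : cosh z = (Real.cosh z.re * Real.cos z.im : ℝ)
      + (Real.sinh z.re * Real.sin z.im : ℝ) * I := by
    conv_lhs => rw [← re_add_im z]
    rw [cosh_add, cosh_mul_I, sinh_mul_I]
    push_cast
    ring
  rw [Complex.sq_norm, hcosh, normSq_add_mul_I]
  nlinarith [Real.sin_sq_add_cos_sq z.im, Real.cosh_sq z.re]

theorem norm_cosh_le_exp_abs_re (z : ℂ) : ‖cosh z‖ ≤ Real.exp |z.re| := by
  have hsq : ‖cosh z‖ ^ 2 ≤ Real.cosh z.re ^ 2 := by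
    rw [norm_cosh_sq, Real.cosh_sq]
    nlinarith [Real.cos_sq_le_one z.im]
  calc ‖cosh z‖ ≤ Real.cosh z.re := abs_le_of_sq_le_sq' hsq (Real.cosh_pos _).le |>.2
    _ = Real.cosh |z.re| := (Real.cosh_abs _).symm
    _ ≤ Real.exp |z.re| := by
      rw [Real.cosh_eq]
      linarith [Real.exp_le_exp.2 (neg_le_self (abs_nonneg z.re))]

theorem abs_sinh_re_le_norm_cosh (z : ℂ) : |Real.sinh z.re| ≤ ‖cosh z‖ :=
  abs_le_of_sq_le_sq (by nlinarith [norm_cosh_sq z, sq_abs (Real.sinh z.re)]) (norm_nonneg _)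

theorem abs_cos_im_le_norm_cosh (z : ℂ) : |Real.cos z.im| ≤ ‖cosh z‖ :=
  abs_le_of_sq_le_sq (by nlinarith [norm_cosh_sq z, sq_abs (Real.cos z.im)]) (norm_nonneg _)

end Complex

theorem Real.exp_abs_le_four_mul_abs_sinh {a : ℝ} (ha : 1 ≤ |a|) : exp |a| ≤ 4 * |sinh a| := by
  rw [Real.abs_sinh, Real.sinh_eq]
  have h2 : 2 ≤ exp |a| := by linarith [Real.add_one_le_exp |a|]
  have h1 : exp (-|a|) ≤ 1 := Real.exp_le_one_iff.2 (by linarith)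
  linarith

theorem half_le_abs_cos_pi_mul_im {n : ℕ} (hn : 3 ≤ n) {z : ℂ} (hz : ‖z‖ = n)
    (hre : |z.re| < 1) : 1 / 2 ≤ |cos (π * z.im)| := by
  have hn3 : (3 : ℝ) ≤ n := by exact_mod_cast hn
  have hsq : |z.re| ^ 2 + |z.im| ^ 2 = (n : ℝ) ^ 2 := by
    rw [← hz, Complex.sq_norm, Complex.normSq_apply, sq_abs, sq_abs]; ring
  have him_le : |z.im| ≤ n := by nlinarith [abs_nonneg z.im]
  -- `(n - |Im z|) (n + |Im z|) = (Re z) ^ 2 < 1` and `n + |Im z| ≥ 3`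
  have hgap : (n : ℝ) - |z.im| ≤ 1 / 3 := by nlinarith [abs_nonneg z.im, abs_nonneg z.re]
  set s := π * (n - |z.im|) with hs
  have hs0 : 0 ≤ s := mul_nonneg pi_pos.le (by linarith)
  have hs3 : s ≤ π / 3 := by rw [hs]; nlinarith [pi_pos]
  have hcos : 1 / 2 ≤ cos s := by
    rw [← cos_pi_div_three]
    exact cos_le_cos_of_nonneg_of_le_pi hs0 (by linarith [pi_pos]) hs3
  calc 1 / 2 ≤ cos s := hcos
    _ = |cos (n * π - s)| := by
      rw [cos_nat_mul_pi_sub, abs_mul, abs_pow, abs_neg, abs_one, one_pow, one_mul,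
        abs_of_nonneg (by linarith)]
    _ = |cos (π * z.im)| := by
      rw [← cos_abs (π * z.im), abs_mul, abs_of_pos pi_pos, hs]; ring_nf

theorem exp_pi_mul_abs_re_le_norm_cosh {n : ℕ} (hn : 3 ≤ n) {z : ℂ} (hz : ‖z‖ = n) :
    exp (π * |z.re|) ≤ 4 * exp π * ‖Complex.cosh (π * z)‖ := by
  have hre : (π * z : ℂ).re = π * z.re := by simp
  have him : (π * z : ℂ).im = π * z.im := by simp
  have habs : |π * z.re| = π * |z.re| := by rw [abs_mul, abs_of_pos pi_pos]
  rcases le_or_gt 1 |z.re| with h | h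
  · calc exp (π * |z.re|) = exp |π * z.re| := by rw [habs]
      _ ≤ 4 * |sinh (π * z.re)| :=
        Real.exp_abs_le_four_mul_abs_sinh (by rw [habs]; nlinarith [pi_gt_three])
      _ ≤ 4 * ‖Complex.cosh (π * z)‖ := by
        rw [← hre]; gcongr; exact Complex.abs_sinh_re_le_norm_cosh _
      _ ≤ 4 * exp π * ‖Complex.cosh (π * z)‖ := by
        nlinarith [one_le_exp pi_pos.le, norm_nonneg (Complex.cosh (π * z))]
  · have hcos := (half_le_abs_cos_pi_mul_im hn hz h).trans
      (him ▸ Complex.abs_cos_im_le_norm_cosh (π * z))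
    calc exp (π * |z.re|) ≤ exp π := exp_le_exp.2 (by nlinarith [pi_pos])
      _ ≤ 4 * exp π * ‖Complex.cosh (π * z)‖ := by nlinarith [exp_pos π]

theorem sq_norm_div_32_le_norm_sq_sub_sq {ν : ℝ} {z : ℂ} (hz : 1 ≤ ‖z‖) (hν : 32 * ν ^ 2 ≤ ‖z‖ ^ 2) :
    ‖z‖ ^ 2 / 32 ≤ ‖(ν : ℂ) ^ 2 - (z + Complex.I / 2) ^ 2 / 4‖ := by
  have hw : ‖z‖ / 2 ≤ ‖z + Complex.I / 2‖ := by
    have := norm_sub_norm_le z (-(Complex.I / 2))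
    rw [sub_neg_eq_add, norm_neg, norm_div, Complex.norm_I, Complex.norm_two] at this
    linarith
  have hν' : ‖(ν : ℂ) ^ 2‖ = ν ^ 2 := by
    rw [← Complex.ofReal_pow, Complex.norm_real, Real.norm_of_nonneg (sq_nonneg ν)]
  calc ‖z‖ ^ 2 / 32 ≤ ‖z + Complex.I / 2‖ ^ 2 / 4 - ν ^ 2 := by
        nlinarith [norm_nonneg z]
    _ = ‖(z + Complex.I / 2) ^ 2 / 4‖ - ‖(ν : ℂ) ^ 2‖ := by
        rw [hν', norm_div, norm_pow, Complex.norm_ofNat]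
    _ ≤ ‖(ν : ℂ) ^ 2 - (z + Complex.I / 2) ^ 2 / 4‖ := by
        rw [norm_sub_rev]; exact norm_sub_norm_le _ _

noncomputable def watsonIntegrand (ν φ : ℝ) (z : ℂ) : ℂ :=
  -Complex.cosh ((z + Complex.I / 2) * φ) /
    (Complex.cosh (π * z) * ((ν : ℂ) ^ 2 - (z + Complex.I / 2) ^ 2 / 4))

theorem norm_watsonIntegrand_le {ν φ : ℝ} (hφ : |φ| ≤ π) {n : ℕ} (hn : 3 ≤ n)
    (hν : 32 * ν ^ 2 ≤ (n : ℝ) ^ 2) {z : ℂ} (hz : ‖z‖ = n) :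
    ‖watsonIntegrand ν φ z‖ ≤ 128 * exp π / (n : ℝ) ^ 2 := by
  have hnum : ‖Complex.cosh ((z + Complex.I / 2) * φ)‖ ≤ 4 * exp π * ‖Complex.cosh (π * z)‖ :=
    calc ‖Complex.cosh ((z + Complex.I / 2) * φ)‖ ≤ exp (|z.re| * |φ|) := by
          simpa [abs_mul] using Complex.norm_cosh_le_exp_abs_re ((z + Complex.I / 2) * φ)
      _ ≤ exp (π * |z.re|) := exp_le_exp.2 (by nlinarith [abs_nonneg z.re])
      _ ≤ 4 * exp π * ‖Complex.cosh (π * z)‖ := exp_pi_mul_abs_re_le_norm_cosh hn hz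
  have hden := sq_norm_div_32_le_norm_sq_sub_sq (ν := ν) (hz ▸ (by exact_mod_cast (by omega : 1 ≤ n)))
    (hz ▸ hν)
  rw [hz] at hden
  have hcosh : 0 < ‖Complex.cosh (π * z)‖ := by
    nlinarith [exp_pos π, exp_pos (π * |z.re|), exp_pi_mul_abs_re_le_norm_cosh hn hz]
  have hn0 : (0 : ℝ) < n := by exact_mod_cast (by omega : 0 < n)
  have hden0 : 0 < ‖(ν : ℂ) ^ 2 - (z + Complex.I / 2) ^ 2 / 4‖ := by
    nlinarith [pow_pos hn0 2]
  rw [watsonIntegrand, norm_div, norm_neg, norm_mul,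
    div_le_div_iff₀ (mul_pos hcosh hden0) (by positivity)]
  calc ‖Complex.cosh ((z + Complex.I / 2) * φ)‖ * n ^ 2
      ≤ 4 * exp π * ‖Complex.cosh (π * z)‖ * n ^ 2 := by gcongr
    _ ≤ 128 * exp π * (‖Complex.cosh (π * z)‖ * ‖(ν : ℂ) ^ 2 - (z + Complex.I / 2) ^ 2 / 4‖) := by
      nlinarith [mul_le_mul_of_nonneg_left hden (by positivity : (0 : ℝ) ≤ 128 * exp π *
        ‖Complex.cosh (π * z)‖)]

theorem norm_integral_semicircle_le {g : ℂ → ℂ} {R B : ℝ} (hR : 0 ≤ R)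
    (hg : ∀ z, ‖z‖ = R → ‖g z‖ ≤ B) :
    ‖∫ t in (0 : ℝ)..π, g (R * Complex.exp (Complex.I * t)) *
      (Complex.I * R * Complex.exp (Complex.I * t))‖ ≤ π * (R * B) := by
  have hexp (t : ℝ) : ‖Complex.exp (Complex.I * t)‖ = 1 := by
    rw [mul_comm]; exact Complex.norm_exp_ofReal_mul_I t
  have hbound : ∀ t ∈ Set.uIoc 0 π, ‖g (R * Complex.exp (Complex.I * t)) *
      (Complex.I * R * Complex.exp (Complex.I * t))‖ ≤ R * B := by
    intro t _
    have hgz := hg (R * Complex.exp (Complex.I * t)) (by simp [hexp, abs_of_nonneg hR])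
    rw [norm_mul, norm_mul, norm_mul, hexp, Complex.norm_I, Complex.norm_real,
      Real.norm_of_nonneg hR]
    nlinarith
  simpa [abs_of_pos pi_pos, mul_comm] using
    intervalIntegral.norm_integral_le_of_norm_le_const hbound

/-- The semicircle contributions (at integer radii `R`) of the Sommerfeld–Watson
integrand with trivial numerator vanish as `R → ∞`. -/
theorem stmt6 (ν φ : ℝ) (hφ : φ ∈ Set.Ioo (-π) π)
    (f : ℂ → ℂ)
    (hf : ∀ z : ℂ, f z = -Complex.cosh ((z + Complex.I/2) * (φ : ℂ)) /
        (Complex.cosh ((π : ℂ) * z) * ((ν : ℂ)^2 - (z + Complex.I/2)^2 / 4)))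
    (Iarc : ℕ → ℂ)
    (hI : ∀ R : ℕ, Iarc R = ∫ t in (0:ℝ)..π,
        f ((R : ℂ) * Complex.exp (Complex.I * t)) *
          (Complex.I * (R : ℂ) * Complex.exp (Complex.I * t))) :
    Tendsto Iarc atTop (nhds 0) := by
  have hφ' : |φ| ≤ π := abs_le.2 ⟨hφ.1.le, hφ.2.le⟩
  have hf' : f = watsonIntegrand ν φ := funext hf
  have hν : ∀ᶠ n : ℕ in atTop, 32 * ν ^ 2 ≤ (n : ℝ) ^ 2 :=
    ((tendsto_pow_atTop two_ne_zero).comp tendsto_natCast_atTop_atTop).eventually_ge_atTop _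
  have hbound : ∀ᶠ n : ℕ in atTop, ‖Iarc n‖ ≤ 128 * π * exp π / n := by
    filter_upwards [eventually_ge_atTop 3, hν] with n hn hνn
    have hn0 : (0 : ℝ) < n := by exact_mod_cast (by omega : 0 < n)
    calc ‖Iarc n‖ ≤ π * (n * (128 * exp π / (n : ℝ) ^ 2)) := by
          rw [hI, hf']
          exact_mod_cast norm_integral_semicircle_le hn0.le
            fun z hz ↦ norm_watsonIntegrand_le hφ' hn hνn hz
      _ = 128 * π * exp π / n := by field_simp
  exact squeeze_zero_norm' hbound (tendsto_const_nhds.div_atTop tendsto_natCast_atTop_atTop)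
end

section
/- Let n be a nonzero real number, and define the complex-valued functions of the real variable ν: V(ν) = i·ν/(ν² + n²/4) and N(ν) = n/(ν² + n²/4). Then for every real ν, both V and N are differentiable and -i·V'(ν) = N(ν)²/4 + V(ν)² and -i·N'(ν) = 2·N(ν)·V(ν). -/
/-! With `d ν = ν² + n²/4` the quotient rule gives `V' = i (n²/4 - ν²) / d²` and
`N' = -2 n ν / d²`, and `N²/4 + V² = (n²/4 - ν²) / d²`, `2 N V = 2 i n ν / d²`: both closure
relations are identities between rational functions with the common denominator `d²`, which
never vanishes because `n ≠ 0`. -/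

open Complex

lemma ofReal_sq_add_sq_div_four_ne_zero {n : ℝ} (hn : n ≠ 0) (ν : ℝ) :
    (ν : ℂ) ^ 2 + (n : ℂ) ^ 2 / 4 ≠ 0 := by
  exact_mod_cast (by positivity : ν ^ 2 + n ^ 2 / 4 ≠ 0)

lemma hasDerivAt_ofReal_sq_add_const (c : ℂ) (ν : ℝ) :
    HasDerivAt (fun x : ℝ => (x : ℂ) ^ 2 + c) (2 * ν) ν := by
  simpa using ((hasDerivAt_id ν).ofReal_comp.pow 2).add_const c

section QuotientRule

variable {c : ℂ} {ν : ℝ}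

lemma hasDerivAt_I_mul_ofReal_div_sq_add (hd : (ν : ℂ) ^ 2 + c ≠ 0) :
    HasDerivAt (fun x : ℝ => I * x / ((x : ℂ) ^ 2 + c))
      (I * (c - ν ^ 2) / ((ν : ℂ) ^ 2 + c) ^ 2) ν := by
  refine (((hasDerivAt_id ν).ofReal_comp.const_mul I).div
    (hasDerivAt_ofReal_sq_add_const c ν) hd).congr_deriv ?_
  simp only [id, ofReal_one]
  ring

lemma hasDerivAt_const_div_ofReal_sq_add (a : ℂ) (hd : (ν : ℂ) ^ 2 + c ≠ 0) :
    HasDerivAt (fun x : ℝ => a / ((x : ℂ) ^ 2 + c)) (-(2 * a * ν) / ((ν : ℂ) ^ 2 + c) ^ 2) ν := by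
  refine ((hasDerivAt_const ν a).div (hasDerivAt_ofReal_sq_add_const c ν) hd).congr_deriv ?_
  ring

end QuotientRule

/-- Closure relations `D_ν V = N²/4 + V²` and `D_ν N = 2NV` with `D_ν = -i ∂_ν`. -/
theorem stmt14 (n : ℝ) (hn : n ≠ 0)
    (V N : ℝ → ℂ)
    (hV : ∀ ν : ℝ, V ν = Complex.I * ν / ((ν : ℂ)^2 + (n : ℂ)^2/4))
    (hN : ∀ ν : ℝ, N ν = (n : ℂ) / ((ν : ℂ)^2 + (n : ℂ)^2/4)) :
    ∀ ν : ℝ, DifferentiableAt ℝ V ν ∧ DifferentiableAt ℝ N ν ∧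
      -Complex.I * deriv V ν = (N ν)^2/4 + (V ν)^2 ∧
      -Complex.I * deriv N ν = 2 * N ν * V ν := by
  intro ν
  have hd := ofReal_sq_add_sq_div_four_ne_zero hn ν
  have hV' : HasDerivAt V _ ν := funext hV ▸ hasDerivAt_I_mul_ofReal_div_sq_add hd
  have hN' : HasDerivAt N _ ν := funext hN ▸ hasDerivAt_const_div_ofReal_sq_add _ hd
  refine ⟨hV'.differentiableAt, hN'.differentiableAt, ?_, ?_⟩
  · rw [hV'.deriv, hV, hN]
    field_simp
    rw [I_sq]
    ring
  · rw [hN'.deriv, hV, hN]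
    field_simp
end

section
/- For every real z with 0 < z < 1, log²(1 - z) = 2·∫₀^z log(1 - u·z)/(u - 1) du + Σ_{k=1}^{∞} z^{2k}/k², where log is the real logarithm and the series is the dilogarithm Li₂(z²). -/
/-!
Write `a n = z ^ (n + 1) / (n + 1)`, so that `-log (1 - z) = ∑ a n`. Since `∫₀^z u^m/(1-u) du` is
the tail `-log (1 - z) - ∑_{j<m} z^(j+1)/(j+1)` of the logarithmic series, expanding
`log (1 - u z)` in powers of `u z` and integrating termwise gives
`∫₀^z log(1-uz)/(u-1) du = ∑ₙ a n * ∑_{m>n} a m`, the off-diagonal half of `(∑ a n)²`.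
The diagonal part `∑ a n ^ 2` is `Li₂(z²)`.
-/

open MeasureTheory Real Finset

section SquareOfSeries

variable {a : ℕ → ℝ} {L : ℝ}

theorem sum_range_sq_add_two_mul_sub_sum_range (a : ℕ → ℝ) (L : ℝ) (N : ℕ) :
    ∑ n ∈ range N, (a n ^ 2 + 2 * (a n * (L - ∑ j ∈ range (n + 1), a j)))
      = 2 * L * ∑ n ∈ range N, a n - (∑ n ∈ range N, a n) ^ 2 := by
  induction N with
  | zero => simp
  | succ N ih => rw [sum_range_succ, ih, sum_range_succ a]; ring

theorem summable_mul_sub_sum_range (ha : ∀ n, 0 ≤ a n) (hL : HasSum a L) :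
    Summable fun n => a n * (L - ∑ j ∈ range (n + 1), a j) := by
  refine (hL.summable.mul_right L).of_nonneg_of_le (fun n => ?_) (fun n => ?_)
  · exact mul_nonneg (ha n) (sub_nonneg.2 (sum_le_hasSum _ (fun j _ => ha j) hL))
  · exact mul_le_mul_of_nonneg_left (sub_le_self _ (sum_nonneg fun j _ => ha j)) (ha n)

theorem sq_eq_tsum_sq_add_two_mul_tsum (ha : ∀ n, 0 ≤ a n) (hL : HasSum a L) :
    L ^ 2 = ∑' n, a n ^ 2 + 2 * ∑' n, a n * (L - ∑ j ∈ range (n + 1), a j) := by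
  have hsq : Summable fun n => a n ^ 2 :=
    (hL.summable.mul_right L).of_nonneg_of_le (fun n => sq_nonneg _) fun n => by
      rw [sq]
      exact mul_le_mul_of_nonneg_left (le_hasSum hL n fun j _ => ha j) (ha n)
  have hsplit := hsq.hasSum.add ((summable_mul_sub_sum_range ha hL).hasSum.mul_left 2)
  have hL2 : HasSum (fun n => a n ^ 2 + 2 * (a n * (L - ∑ j ∈ range (n + 1), a j))) (L ^ 2) := by
    rw [hsplit.summable.hasSum_iff_tendsto_nat]
    simp_rw [sum_range_sq_add_two_mul_sub_sum_range]
    convert (hL.tendsto_sum_nat.const_mul (2 * L)).sub (hL.tendsto_sum_nat.pow 2) using 2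
    ring
  exact hL2.unique hsplit

end SquareOfSeries

theorem hasDerivAt_neg_log_one_sub_sub_sum_range (n : ℕ) {u : ℝ} (hu : u < 1) :
    HasDerivAt (fun u => -log (1 - u) - ∑ j ∈ range n, u ^ (j + 1) / (j + 1))
      (u ^ n / (1 - u)) u := by
  have hlog := ((hasDerivAt_id u).const_sub 1).log (sub_ne_zero.2 hu.ne')
  have hsum : HasDerivAt (fun u : ℝ => ∑ j ∈ range n, u ^ (j + 1) / (j + 1))
      (∑ j ∈ range n, u ^ j) u :=
    .fun_sum fun j _ => ((hasDerivAt_pow (j + 1) u).div_const _).congr_deriv (by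
      push_cast; field_simp)
  refine (hlog.neg.sub hsum).congr_deriv ?_
  rw [geom_sum_eq hu.ne, id]
  field_simp [sub_ne_zero.2 hu.ne, sub_ne_zero.2 hu.ne']
  ring

theorem integral_pow_div_one_sub {z : ℝ} (hz : z < 1) (n : ℕ) :
    ∫ u in (0 : ℝ)..z, u ^ n / (1 - u) = -log (1 - z) - ∑ j ∈ range n, z ^ (j + 1) / (j + 1) := by
  have hlt : ∀ u ∈ Set.uIcc 0 z, u < 1 := fun u hu =>
    (Set.mem_uIcc.1 hu).elim (fun h => h.2.trans_lt hz) (fun h => h.2.trans_lt one_pos)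
  rw [intervalIntegral.integral_eq_sub_of_hasDerivAt
    (fun u hu => hasDerivAt_neg_log_one_sub_sub_sum_range n (hlt u hu))]
  · simp
  · exact ContinuousOn.intervalIntegrable (continuousOn_id.pow n |>.div
      (continuousOn_const.sub continuousOn_id) fun u hu => sub_ne_zero.2 (hlt u hu).ne')

theorem hasSum_log_one_sub_mul_div_sub_one {u z : ℝ} (huz : |u * z| < 1) :
    HasSum (fun n : ℕ => z ^ (n + 1) / (n + 1) * (u ^ (n + 1) / (1 - u)))
      (log (1 - u * z) / (u - 1)) := by
  have h := (hasSum_pow_div_log_of_abs_lt_one huz).div_const (1 - u)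
  rw [neg_div, ← div_neg, neg_sub] at h
  refine h.congr_fun fun n => ?_
  rw [mul_pow]
  ring

theorem hasSum_integral_log_one_sub_mul_div_sub_one {z : ℝ} (h0 : 0 ≤ z) (h1 : z < 1) :
    HasSum (fun n : ℕ => z ^ (n + 1) / (n + 1) * ∫ u in (0 : ℝ)..z, u ^ (n + 1) / (1 - u))
      (∫ u in (0 : ℝ)..z, log (1 - u * z) / (u - 1)) := by
  set F : ℕ → ℝ → ℝ := fun n u => z ^ (n + 1) / (n + 1) * (u ^ (n + 1) / (1 - u))
  have huz : ∀ u ∈ Set.Icc 0 z, 0 < 1 - u * z := fun u hu => by nlinarith [hu.1, hu.2]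
  have hF : ∀ u ∈ Set.Icc 0 z, HasSum (F · u) (log (1 - u * z) / (u - 1)) := fun u hu =>
    hasSum_log_one_sub_mul_div_sub_one <| by
      rw [abs_of_nonneg (mul_nonneg hu.1 h0)]
      linarith [huz u hu]
  have hF_nonneg : ∀ n, ∀ u ∈ Set.Icc 0 z, 0 ≤ F n u := fun n u hu =>
    mul_nonneg (by positivity) (div_nonneg (pow_nonneg hu.1 _) (by linarith [hu.2]))
  have hIoc : ∀ u ∈ Set.uIoc 0 z, u ∈ Set.Icc 0 z := fun u hu =>
    Set.Ioc_subset_Icc_self (Set.uIoc_of_le h0 ▸ hu)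
  simp_rw [← intervalIntegral.integral_const_mul]
  -- `F` is nonnegative, so it serves as its own dominating bound.
  refine intervalIntegral.hasSum_integral_of_dominated_convergence F
    (fun n => (by fun_prop : Measurable (F n)).aestronglyMeasurable)
    (fun n => .of_forall fun u hu => (norm_of_nonneg (hF_nonneg n u (hIoc u hu))).le)
    (.of_forall fun u hu => (hF u (hIoc u hu)).summable) ?_
    (.of_forall fun u hu => hF u (hIoc u hu))
  refine ContinuousOn.intervalIntegrable
    (ContinuousOn.congr (f := fun u => log (1 - u * z) / (u - 1)) ?_
      fun u hu => (hF u (Set.uIcc_of_le h0 ▸ hu)).tsum_eq)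
  rw [Set.uIcc_of_le h0]
  exact ContinuousOn.div (ContinuousOn.log (by fun_prop) fun u hu => (huz u hu).ne') (by fun_prop)
    fun u hu => (sub_neg.2 (hu.2.trans_lt h1)).ne

/-- `log²(1-z) = 2∫₀^z log(1-uz)/(u-1) du + Li₂(z²)` for `0 < z < 1`. -/
theorem stmt16 (z : ℝ) (h0 : 0 < z) (h1 : z < 1) :
    (Real.log (1 - z))^2
      = 2 * (∫ u in (0:ℝ)..z, Real.log (1 - u*z) / (u - 1))
        + ∑' k : ℕ, z^(2*(k+1))/((k : ℝ)+1)^2 := by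
  have hlog : HasSum (fun n : ℕ => z ^ (n + 1) / (n + 1)) (-log (1 - z)) :=
    hasSum_pow_div_log_of_abs_lt_one (abs_lt.2 ⟨by linarith, h1⟩)
  have hsq := sq_eq_tsum_sq_add_two_mul_tsum (fun n => by positivity) hlog
  have hint := (hasSum_integral_log_one_sub_mul_div_sub_one h0.le h1).tsum_eq
  simp_rw [integral_pow_div_one_sub h1] at hint
  rw [← neg_sq, hsq, hint, add_comm]
  congr 2 with k
  rw [div_pow, ← pow_mul, mul_comm]
end
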